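/- In a triangulated category, given a commutative square with vertical maps α: A → A', β: B → B' and horizontal maps φ: A → B, φ': A' → B' completing to distinguished triangles A → B → C → A[1] and A' → B' → C' → A'[1], and given distinguished triangles A → A' → A'' → A[1] and B → B' → B'' → B[1], there exists a morphism γ : C → C' with mapping cone C'' such that A'' → B'' → C'' → A''[1] is a distinguished triangle and the resulting 3×3 diagram commutes. -/

import Mathlib

/- STATEMENT 3: the nine lemma in a triangulated category.  Given a
commutative square (α,β,φ,φ') whose rows complete to distinguished triangles
A → B → C → A[1] and A' → B' → C' → A'[1], and distinguished triangles
A → A' → A'' → A[1] and B → B' → B'' → B[1], there is a morphism γ : C → C'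
with a mapping cone C'' such that A'' → B'' → C'' → A''[1] is distinguished
and the resulting 3×3 diagram commutes. -/

open CategoryTheory Pretriangulated

theorem nine_lemma_triangulated
    {𝒯 : Type*} [Category 𝒯] [Preadditive 𝒯] [Limits.HasZeroObject 𝒯]
    [HasShift 𝒯 ℤ] [∀ n : ℤ, (shiftFunctor 𝒯 n).Additive] [Pretriangulated 𝒯]
    [IsTriangulated 𝒯]
    {A B C A' B' C' A'' B'' : 𝒯}
    (φ : A ⟶ B) (ψ : B ⟶ C) (w : C ⟶ A⟦(1 : ℤ)⟧)
    (φ' : A' ⟶ B') (ψ' : B' ⟶ C') (w' : C' ⟶ A'⟦(1 : ℤ)⟧)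
    (α : A ⟶ A') (α' : A' ⟶ A'') (α'' : A'' ⟶ A⟦(1 : ℤ)⟧)
    (β : B ⟶ B') (β' : B' ⟶ B'') (β'' : B'' ⟶ B⟦(1 : ℤ)⟧)
    (h1 : Triangle.mk φ ψ w ∈ distinguishedTriangles)
    (h2 : Triangle.mk φ' ψ' w' ∈ distinguishedTriangles)
    (h3 : Triangle.mk α α' α'' ∈ distinguishedTriangles)
    (h4 : Triangle.mk β β' β'' ∈ distinguishedTriangles)
    (hsq : φ ≫ β = α ≫ φ') :
    ∃ (C'' : 𝒯) (γ : C ⟶ C') (γ' : C' ⟶ C'') (γ'' : C'' ⟶ C⟦(1 : ℤ)⟧)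
      (φ'' : A'' ⟶ B'') (ψ'' : B'' ⟶ C'') (w'' : C'' ⟶ A''⟦(1 : ℤ)⟧),
      -- C'' is a mapping cone of γ
      Triangle.mk γ γ' γ'' ∈ distinguishedTriangles ∧
      -- the third row is a distinguished triangle
      Triangle.mk φ'' ψ'' w'' ∈ distinguishedTriangles ∧
      -- commutativity of the 3×3 diagram
      ψ ≫ γ = β ≫ ψ' ∧
      γ ≫ w' = w ≫ α⟦(1 : ℤ)⟧' ∧
      φ' ≫ β' = α' ≫ φ'' ∧
      ψ' ≫ γ' = β' ≫ ψ'' ∧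
      φ'' ≫ β'' = α'' ≫ φ⟦(1 : ℤ)⟧' ∧
      ψ'' ≫ γ'' = β'' ≫ ψ⟦(1 : ℤ)⟧' := by
  -- the diagonal map θ = φ ≫ β = α ≫ φ', with a chosen cone D
  obtain ⟨D, v, wθ, hθ⟩ := distinguished_cocone_triangle (φ ≫ β)
  have hθ' : Triangle.mk (α ≫ φ') v wθ ∈ distinguishedTriangles := by
    rw [← hsq]; exact hθ
  -- first octahedron, on φ ≫ β
  let O1 := Triangulated.someOctahedron (rfl : φ ≫ β = φ ≫ β) h1 h4 hθ
  -- second octahedron, on α ≫ φ'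
  let O2 := Triangulated.someOctahedron (rfl : α ≫ φ' = α ≫ φ') h3 h2 hθ'
  set a : C ⟶ D := O1.m₁ with ha
  set p : D ⟶ B'' := O1.m₃ with hp
  set q : A'' ⟶ D := O2.m₁ with hq
  set b : D ⟶ C' := O2.m₃ with hb
  -- choose a cone for γ := a ≫ b
  obtain ⟨C'', γ', γ'', hγ⟩ := distinguished_cocone_triangle (a ≫ b)
  -- third octahedron, on a ≫ b
  have hbrot : Triangle.mk b (w' ≫ α'⟦(1:ℤ)⟧') (-q⟦(1:ℤ)⟧') ∈ distinguishedTriangles := by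
    exact rot_of_distTriang _ O2.mem
  let O3 := Triangulated.someOctahedron (rfl : a ≫ b = a ≫ b) O1.mem hbrot hγ
  refine ⟨C'', a ≫ b, γ', γ'', q ≫ p, O3.m₁, O3.m₃, hγ, ?_, ?_, ?_, ?_, ?_, ?_, ?_⟩
  · -- third row distinguished: inverse-rotate O3.mem
    rw [rotate_distinguished_triangle]
    refine isomorphic_distinguished _ O3.mem _
      (Triangle.isoMk _ _ (Iso.refl _) (Iso.refl _) (Iso.refl _) ?_ ?_ ?_) <;> simp
    · exact (Category.comp_id _).trans (Category.id_comp _).symm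
    · exact (Category.comp_id _).trans (Category.id_comp _).symm
    · change (-(shiftFunctor 𝒯 1).map (q ≫ p)) ≫ (shiftFunctor 𝒯 1).map (𝟙 B'') =
        𝟙 ((shiftFunctor 𝒯 1).obj A'') ≫ (-(shiftFunctor 𝒯 1).map q ≫ (shiftFunctor 𝒯 1).map O1.m₃)
      simp [hp]
  · -- ψ ≫ γ = β ≫ ψ'
    have e1 : ψ ≫ a = β ≫ v := O1.comm₁
    have e2 : v ≫ b = ψ' := O2.comm₃
    rw [← Category.assoc, e1, Category.assoc, e2]
  · -- γ ≫ w' = w ≫ α⟦1⟧'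
    have e1 : wθ ≫ α⟦(1:ℤ)⟧' = b ≫ w' := O2.comm₄
    have e2 : a ≫ wθ = w := O1.comm₂
    rw [Category.assoc, ← e1, ← Category.assoc, e2]
  · -- φ' ≫ β' = α' ≫ (q ≫ p)
    have e1 : α' ≫ q = φ' ≫ v := O2.comm₁
    have e2 : v ≫ p = β' := O1.comm₃
    rw [← Category.assoc, e1, Category.assoc, e2]
  · -- ψ' ≫ γ' = β' ≫ ψ''
    have e1 : v ≫ p = β' := O1.comm₃
    have e2 : p ≫ O3.m₁ = b ≫ γ' := O3.comm₁
    have e3 : v ≫ b = ψ' := O2.comm₃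
    rw [← e3, Category.assoc, ← e2, ← Category.assoc, e1]
  · -- (q ≫ p) ≫ β'' = α'' ≫ φ⟦1⟧'
    have e1 : wθ ≫ φ⟦(1:ℤ)⟧' = p ≫ β'' := O1.comm₄
    have e2 : q ≫ wθ = α'' := O2.comm₂
    rw [Category.assoc, ← e1, ← Category.assoc, e2]
  · -- ψ'' ≫ γ'' = β'' ≫ ψ⟦1⟧'
    exact O3.comm₂
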